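/- The pair of maps (Des, g) : B_n ⇄ 2^{[0,n−1]} is a Galois connection, where B_n carries the weak order, 2^{[0,n−1]} (the set of subsets of {0,1,…,n−1}) carries inclusion, Des sends a signed permutation to its descent set, and g sends I ⊆ {0,1,…,n−1} to ζ_I, the largest element of the descent class {w ∈ B_n : Des(w) = I}. In particular Des is order-preserving and surjective, g is order-preserving, and Des(w) ⊆ I ⇔ w ≤ ζ_I for all w ∈ B_n and I ⊆ {0,1,…,n−1}. -/

import Mathlib

open Finset

open scoped Classical

/-- The hyperoctahedral group `𝔅ₙ`, realized as the set of those permutations `w` of `ℤ`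
that satisfy `w (-i) = - w i` for all `i` and fix every integer of absolute value `> n`.
One-line notation: `w₁ ⋯ w_n` with `w_i = w i` for `1 ≤ i ≤ n`. -/
def SignedPerm (n : ℕ) : Set (Equiv.Perm ℤ) :=
  {w | (∀ i : ℤ, w (-i) = - w i) ∧ (∀ i : ℤ, (n : ℤ) < |i| → w i = i)}

/-- The inversion set `Inv(w) = {(i,j) : 1 ≤ i < j ≤ n, w_i > w_j}`. -/
noncomputable def InvSet (n : ℕ) (w : Equiv.Perm ℤ) : Finset (ℤ × ℤ) :=
  ((Finset.Icc (1 : ℤ) (n : ℤ)) ×ˢ (Finset.Icc (1 : ℤ) (n : ℤ))).filter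
    fun p => p.1 < p.2 ∧ w p.2 < w p.1

/-- The set of negative indices `Nega(w) = {i ∈ [n] : w_i < 0}`. -/
noncomputable def NegaSet (n : ℕ) (w : Equiv.Perm ℤ) : Finset ℤ :=
  (Finset.Icc (1 : ℤ) (n : ℤ)).filter fun i => w i < 0

/-- The negative sum pair set `Nsp(w) = {(i,j) : 1 ≤ i < j ≤ n, w_i + w_j < 0}`. -/
noncomputable def NspSet (n : ℕ) (w : Equiv.Perm ℤ) : Finset (ℤ × ℤ) :=
  ((Finset.Icc (1 : ℤ) (n : ℤ)) ×ˢ (Finset.Icc (1 : ℤ) (n : ℤ))).filter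
    fun p => p.1 < p.2 ∧ w p.1 + w p.2 < 0

/-- The Coxeter length of `w ∈ 𝔅ₙ`: `ℓ(w) = #Inv(w) + #Nega(w) + #Nsp(w)`. -/
noncomputable def blen (n : ℕ) (w : Equiv.Perm ℤ) : ℕ :=
  (InvSet n w).card + (NegaSet n w).card + (NspSet n w).card

/-- The left weak order on `𝔅ₙ`: `u ≤ v` iff `ℓ(v) = ℓ(u) + ℓ(v * u⁻¹)`. -/
def wle (n : ℕ) (u v : Equiv.Perm ℤ) : Prop :=
  blen n v = blen n u + blen n (v * u⁻¹)

/-- The Coxeter generators of `𝔅ₙ`: `s₀ = (1,-1)` and `sᵢ = (i,i+1)(-i,-(i+1))` for `i ≥ 1`. -/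
def sB (i : ℕ) : Equiv.Perm ℤ :=
  if i = 0 then Equiv.swap 1 (-1)
  else Equiv.swap (i : ℤ) ((i : ℤ) + 1) * Equiv.swap (-(i : ℤ)) (-((i : ℤ) + 1))

/-- `a[p] = a + p` if `a > 0`, `a - p` if `a < 0` (and `0 ↦ 0`). -/
def shiftFun (p : ℕ) (b : ℤ) : ℤ :=
  if 0 < b then b + (p : ℤ) else if b < 0 then b - (p : ℤ) else 0

/-- `w` is the shifted product `u × v ∈ 𝔅_{p+q}` of `u ∈ 𝔅_p` and `v ∈ 𝔅_q`:
its one-line notation is `(u₁, …, u_p, v₁[p], …, v_q[p])`. -/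
def IsSProd (p q : ℕ) (u v w : Equiv.Perm ℤ) : Prop :=
  w ∈ SignedPerm (p + q) ∧
  (∀ a : ℤ, 1 ≤ a → a ≤ (p : ℤ) → w a = u a) ∧
  (∀ a : ℤ, (p : ℤ) < a → a ≤ (p : ℤ) + (q : ℤ) → w a = shiftFun p (v (a - (p : ℤ))))

/-- `ξ` is a `(p,q)`-shuffle: an element of `𝔅_{p+q}` with positive entries (a permutation)
that is increasing on each of the blocks `[1,p]` and `[p+1,p+q]`. -/
def IsShuffle (p q : ℕ) (ξ : Equiv.Perm ℤ) : Prop :=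
  ξ ∈ SignedPerm (p + q) ∧
  (∀ a : ℤ, 1 ≤ a → a ≤ (p : ℤ) + (q : ℤ) → 0 < ξ a) ∧
  (∀ a b : ℤ, 1 ≤ a → a < b → b ≤ (p : ℤ) → ξ a < ξ b) ∧
  (∀ a b : ℤ, (p : ℤ) < a → a < b → b ≤ (p : ℤ) + (q : ℤ) → ξ a < ξ b)

/-- `w` is the standard signed permutation `sts(a₁ ⋯ a_m)` of the word `a₁ ⋯ a_m = a 1, …, a m`
(of nonzero integers): the unique `w ∈ 𝔅_m` with the same negative index set and
`|w_i| < |w_j| ↔ |a_i| ≤ |a_j|` for `1 ≤ i < j ≤ m`. -/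
def IsSts (m : ℕ) (a : ℤ → ℤ) (w : Equiv.Perm ℤ) : Prop :=
  w ∈ SignedPerm m ∧
  (∀ i : ℤ, 1 ≤ i → i ≤ (m : ℤ) → (w i < 0 ↔ a i < 0)) ∧
  (∀ i j : ℤ, 1 ≤ i → i < j → j ≤ (m : ℤ) → (|w i| < |w j| ↔ |a i| ≤ |a j|))

/-- The standard signed permutation of a word, as a function. -/
noncomputable def sts (m : ℕ) (a : ℤ → ℤ) : Equiv.Perm ℤ :=
  if h : ∃ w, IsSts m a w then h.choose else 1

/-- Descent set of `w ∈ 𝔅ₙ`: `Des(w) = {i ∈ [0,n-1] : w_i > w_{i+1}}` with `w₀ = 0`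
(note `w 0 = 0` holds automatically). -/
def DesSet (n : ℕ) (w : Equiv.Perm ℤ) : Finset ℕ :=
  (Finset.range n).filter fun i => w ((i : ℤ) + 1) < w (i : ℤ)

/-- Global descent set of `u ∈ 𝔅ₙ`. -/
noncomputable def GDesSet (n : ℕ) (u : Equiv.Perm ℤ) : Finset ℕ :=
  (Finset.Ico 1 n).filter fun i =>
    ∀ j k : ℤ, 1 ≤ j → j ≤ (i : ℤ) → (i : ℤ) < k → k ≤ (n : ℤ) → u k < u j

/-- `m` is the meet (greatest lower bound) of `x` and `y` within `S`, w.r.t. the weak order. -/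
def IsMeetIn (n : ℕ) (S : Set (Equiv.Perm ℤ)) (x y m : Equiv.Perm ℤ) : Prop :=
  m ∈ S ∧ wle n m x ∧ wle n m y ∧ ∀ z ∈ S, wle n z x → wle n z y → wle n z m

/-- `j` is the join (least upper bound) of `x` and `y` within `S`, w.r.t. the weak order. -/
def IsJoinIn (n : ℕ) (S : Set (Equiv.Perm ℤ)) (x y j : Equiv.Perm ℤ) : Prop :=
  j ∈ S ∧ wle n x j ∧ wle n y j ∧ ∀ z ∈ S, wle n x z → wle n y z → wle n j z

/-- The set `𝔅_p × 𝔅_{q,K} ⊆ 𝔅_{p+q}` of shifted products `u × v` with `u ∈ 𝔅_p`,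
`v ∈ 𝔅_q`, `Nega(v) = K`. -/
def SProdComp (p q : ℕ) (K : Finset ℤ) : Set (Equiv.Perm ℤ) :=
  {w | ∃ u v : Equiv.Perm ℤ, u ∈ SignedPerm p ∧ v ∈ SignedPerm q ∧ NegaSet q v = K ∧
        IsSProd p q u v w}

/-- `w` is the iterated shifted product `u⁽¹⁾ × ⋯ × u⁽ᵏ⁾` of the list `us` of signed
permutations with block sizes given by the list `ps`. -/
def IsMultiSProd (ps : List ℕ) (us : List (Equiv.Perm ℤ)) (w : Equiv.Perm ℤ) : Prop :=
  w ∈ SignedPerm ps.sum ∧ us.length = ps.length ∧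
  ∀ i < ps.length,
    us.getD i 1 ∈ SignedPerm (ps.getD i 0) ∧
    ∀ a : ℤ, ((ps.take i).sum : ℤ) < a → a ≤ ((ps.take i).sum : ℤ) + (ps.getD i 0 : ℤ) →
      w a = shiftFun ((ps.take i).sum) ((us.getD i 1) (a - ((ps.take i).sum : ℤ)))

/-- The subset `𝔅_{p₁} × 𝔅_{p₂} × ⋯ × 𝔅_{p_k}` of `𝔅_{p₁+⋯+p_k}`. -/
def MultiProdSet (ps : List ℕ) : Set (Equiv.Perm ℤ) :=
  {w | ∃ us, IsMultiSProd ps us w}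

/-- The `(L₂,…,L_k)`-component `𝔅_{p₁} × 𝔅_{p₂,L₂} × ⋯ × 𝔅_{p_k,L_k}`, where
`Ls.getD (i-1) ∅` is the prescribed negative index set of the `(i+1)`-st factor. -/
def ComponentSet (ps : List ℕ) (Ls : List (Finset ℤ)) : Set (Equiv.Perm ℤ) :=
  {w | ∃ us, IsMultiSProd ps us w ∧
        ∀ i, 1 ≤ i → i < ps.length →
          NegaSet (ps.getD i 0) (us.getD i 1) = Ls.getD (i - 1) ∅}

/-- `ξ ∈ Sh(p₁,…,p_k)`: a permutation in `𝔅_{p₁+⋯+p_k}` (all entries positive)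
increasing on each consecutive block. -/
def IsMultiShuffle (ps : List ℕ) (ξ : Equiv.Perm ℤ) : Prop :=
  ξ ∈ SignedPerm ps.sum ∧
  (∀ a : ℤ, 1 ≤ a → a ≤ (ps.sum : ℤ) → 0 < ξ a) ∧
  ∀ i < ps.length, ∀ a b : ℤ,
    ((ps.take i).sum : ℤ) < a → a < b → b ≤ ((ps.take i).sum : ℤ) + (ps.getD i 0 : ℤ) →
      ξ a < ξ b

/-!
Realize `w ∈ B_n` as an odd permutation of `[-n, n]` and let `fullInvSet n w` be its set of
inversions, leaving out the pairs `(-a, a)`. It has `2 ℓ(w)` elements, and the inversions of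
`v u⁻¹` are those of `u` or of `v` but not both, transported by `u`; hence `u ≤ v` in the weak order
iff `fullInvSet n u ⊆ fullInvSet n v`. As `i ∈ Des(w)` iff `(i, i + 1)` is an inversion, `Des` is
monotone.

Conversely, let `Des(w) ⊊ I` and `i ∈ I ∖ Des(w)`. Take the largest nonzero value `x < w(i+1)` at
a position `≤ i` and its successor `y` in `ℤ ∖ {0}`: `y` sits at a position `> i`, so the simple
reflection exchanging `±x` with `±y` creates one inversion, and when applied on the left it adds
no descent besides `i`. Repeating this reaches the descent class of `I`, which lies below `ζ_I`.
-/

namespace SignedPerm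

variable {n : ℕ} {u v w : Equiv.Perm ℤ}

theorem apply_neg (hw : w ∈ SignedPerm n) (a : ℤ) : w (-a) = -w a := hw.1 a

theorem apply_zero (hw : w ∈ SignedPerm n) : w 0 = 0 := by
  have h := hw.1 0
  rw [neg_zero] at h
  omega

theorem apply_eq_zero_iff (hw : w ∈ SignedPerm n) {a : ℤ} : w a = 0 ↔ a = 0 :=
  ⟨fun h => w.injective (h.trans (apply_zero hw).symm), fun h => h ▸ apply_zero hw⟩

theorem apply_mem_Icc (hw : w ∈ SignedPerm n) {a : ℤ} (ha : a ∈ Set.Icc (-(n : ℤ)) n) :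
    w a ∈ Set.Icc (-(n : ℤ)) n := by
  by_contra h
  rw [Set.mem_Icc, not_and_or, not_le, not_le] at h
  have := w.injective (hw.2 (w a) (by rw [lt_abs]; omega))
  exact h.elim (fun h => ha.1.not_gt (this ▸ h)) fun h => ha.2.not_gt (this ▸ h)

theorem inv_mem (hw : w ∈ SignedPerm n) : w⁻¹ ∈ SignedPerm n := by
  refine ⟨fun a => w.injective ?_, fun a ha => w.injective ?_⟩
  · simp only [Equiv.Perm.coe_inv, Equiv.apply_symm_apply, apply_neg hw]
  · simp only [Equiv.Perm.coe_inv, Equiv.apply_symm_apply, hw.2 a ha]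

theorem mul_mem (hu : u ∈ SignedPerm n) (hv : v ∈ SignedPerm n) : u * v ∈ SignedPerm n :=
  ⟨fun a => by simp only [Equiv.Perm.mul_apply, apply_neg hu, apply_neg hv],
    fun a ha => by simp only [Equiv.Perm.mul_apply, hv.2 a ha, hu.2 a ha]⟩

theorem apply_add_apply_eq_zero_iff (hu : u ∈ SignedPerm n) {a b : ℤ} :
    u a + u b = 0 ↔ a + b = 0 := by
  rw [add_eq_zero_iff_eq_neg, ← apply_neg hu, u.injective.eq_iff, add_eq_zero_iff_eq_neg]

theorem apply_mem_Icc_iff (hu : u ∈ SignedPerm n) {a : ℤ} :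
    u a ∈ Set.Icc (-(n : ℤ)) n ↔ a ∈ Set.Icc (-(n : ℤ)) n :=
  ⟨fun h => by simpa using apply_mem_Icc (inv_mem hu) h, apply_mem_Icc hu⟩

end SignedPerm

section InversionSet

variable {n : ℕ} {u v w σ ζ : Equiv.Perm ℤ} {p q : ℤ} {I : Finset ℕ}

open SignedPerm

noncomputable def fullInvSet (n : ℕ) (w : Equiv.Perm ℤ) : Finset (ℤ × ℤ) :=
  ((Icc (-(n : ℤ)) n) ×ˢ (Icc (-(n : ℤ)) n)).filter
    fun p => p.1 < p.2 ∧ p.1 + p.2 ≠ 0 ∧ w p.2 < w p.1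

theorem mem_fullInvSet {a b : ℤ} : (a, b) ∈ fullInvSet n w ↔
    -(n : ℤ) ≤ a ∧ a ≤ n ∧ -(n : ℤ) ≤ b ∧ b ≤ n ∧ a < b ∧ a + b ≠ 0 ∧ w b < w a := by
  simp only [fullInvSet, mem_filter, mem_product, mem_Icc, and_assoc]

theorem mem_InvSet {a b : ℤ} :
    (a, b) ∈ InvSet n w ↔ 1 ≤ a ∧ a ≤ n ∧ 1 ≤ b ∧ b ≤ n ∧ a < b ∧ w b < w a := by
  simp only [InvSet, mem_filter, mem_product, mem_Icc, and_assoc]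

theorem mem_NegaSet {a : ℤ} : a ∈ NegaSet n w ↔ 1 ≤ a ∧ a ≤ n ∧ w a < 0 := by
  simp only [NegaSet, mem_filter, mem_Icc, and_assoc]

theorem mem_NspSet {a b : ℤ} :
    (a, b) ∈ NspSet n w ↔ 1 ≤ a ∧ a ≤ n ∧ 1 ≤ b ∧ b ≤ n ∧ a < b ∧ w a + w b < 0 := by
  simp only [NspSet, mem_filter, mem_product, mem_Icc, and_assoc]

theorem fullInvSet_filter_pos (hw : w ∈ SignedPerm n) :
    (fullInvSet n w).filter (fun p => 0 < p.1 + p.2) = InvSet n w ∪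
      (NegaSet n w).image (fun b => (0, b)) ∪ (NspSet n w).image (fun p => (-p.1, p.2)) := by
  ext ⟨a, b⟩
  simp only [mem_filter, mem_union, mem_image, mem_fullInvSet, mem_InvSet, mem_NegaSet,
    mem_NspSet, Prod.mk.injEq, Prod.exists]
  constructor
  · rintro ⟨⟨-, -, -, hb, hab, -, hinv⟩, hpos⟩
    rcases lt_trichotomy a 0 with ha | rfl | ha
    · refine Or.inr ⟨-a, b, ?_, neg_neg a, rfl⟩
      rw [apply_neg hw]
      omega
    · exact Or.inl (Or.inr ⟨b, ⟨by omega, hb, apply_zero hw ▸ hinv⟩, rfl, rfl⟩)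
    · exact Or.inl (Or.inl ⟨by omega, by omega, by omega, hb, hab, hinv⟩)
  · rintro ((h | ⟨b, h, rfl, rfl⟩) | ⟨a, b, h, rfl, rfl⟩)
    · omega
    · simp only [apply_zero hw]; omega
    · simp only [apply_neg hw]; omega

theorem card_fullInvSet_filter_pos (hw : w ∈ SignedPerm n) :
    #((fullInvSet n w).filter (fun p => 0 < p.1 + p.2)) =
      #(InvSet n w) + #(NegaSet n w) + #(NspSet n w) := by
  have hInv : ∀ p ∈ InvSet n w, 0 < p.1 := fun ⟨a, b⟩ h => by rw [mem_InvSet] at h; omega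
  have hNega : ∀ p ∈ (NegaSet n w).image (fun b => ((0 : ℤ), b)), p.1 = 0 := by simp
  have hNsp : ∀ p ∈ (NspSet n w).image (fun p => (-p.1, p.2)), p.1 < 0 := by
    simp only [mem_image, Prod.exists, forall_exists_index, and_imp]
    rintro _ a b h rfl
    exact neg_neg_of_pos (mem_NspSet.1 h).1
  rw [fullInvSet_filter_pos hw, card_union_of_disjoint, card_union_of_disjoint,
    card_image_of_injective _ (Prod.mk_right_injective 0),
    card_image_of_injective _ fun p q h => by simpa [Prod.ext_iff] using h]
  · exact disjoint_left.2 fun p h₁ h₂ => (hInv p h₁).ne' (hNega p h₂)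
  · refine disjoint_left.2 fun p h₁ h₂ => (hNsp p h₂).not_ge ?_
    rcases mem_union.1 h₁ with h | h
    exacts [(hInv p h).le, (hNega p h).ge]

theorem card_fullInvSet (hw : w ∈ SignedPerm n) : #(fullInvSet n w) = 2 * blen n w := by
  have hmirror : #((fullInvSet n w).filter fun p => ¬ 0 < p.1 + p.2) =
      #((fullInvSet n w).filter fun p => 0 < p.1 + p.2) := by
    refine card_nbij' (fun p => (-p.2, -p.1)) (fun p => (-p.2, -p.1)) ?_ ?_
      (fun p _ => by simp) (fun p _ => by simp) <;>
    · rintro ⟨a, b⟩ h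
      simp only [coe_filter, Set.mem_ofPred_eq, mem_fullInvSet, apply_neg hw] at h ⊢
      omega
  rw [← card_filter_add_card_filter_not (fun p => 0 < p.1 + p.2), hmirror,
    card_fullInvSet_filter_pos hw, blen]
  ring

theorem mem_fullInvSet_mul_inv (hu : u ∈ SignedPerm n) {c d : ℤ} :
    (c, d) ∈ fullInvSet n (v * u⁻¹) ↔ -(n : ℤ) ≤ u⁻¹ c ∧ u⁻¹ c ≤ n ∧ -(n : ℤ) ≤ u⁻¹ d ∧
      u⁻¹ d ≤ n ∧ u⁻¹ c + u⁻¹ d ≠ 0 ∧ c < d ∧ v (u⁻¹ d) < v (u⁻¹ c) := by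
  obtain ⟨a, rfl⟩ := u.surjective c
  obtain ⟨b, rfl⟩ := u.surjective d
  have ha := apply_mem_Icc_iff hu (a := a)
  have hb := apply_mem_Icc_iff hu (a := b)
  simp only [Set.mem_Icc] at ha hb
  simp only [mem_fullInvSet, Equiv.Perm.mul_apply, Equiv.Perm.coe_inv, Equiv.symm_apply_apply, Ne,
    apply_add_apply_eq_zero_iff hu]
  tauto

theorem card_fullInvSet_mul_inv (hu : u ∈ SignedPerm n) : #(fullInvSet n (v * u⁻¹)) =
    #(fullInvSet n v \ fullInvSet n u) + #(fullInvSet n u \ fullInvSet n v) := by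
  rw [← card_filter_add_card_filter_not (fun p => u⁻¹ p.1 < u⁻¹ p.2)]
  congr 1
  · refine card_nbij' (fun p => (u⁻¹ p.1, u⁻¹ p.2)) (fun p => (u p.1, u p.2)) ?_ ?_
      (fun p _ => by simp) (fun p _ => by simp) <;>
    · rintro ⟨a, b⟩ h
      have hu₁ := u.injective.eq_iff (a := a) (b := b)
      have hu₂ := u.symm.injective.eq_iff (a := a) (b := b)
      simp only [coe_filter, Set.mem_ofPred_eq, mem_fullInvSet_mul_inv hu, coe_sdiff,
        Set.mem_sdiff, mem_coe, mem_fullInvSet, Equiv.Perm.coe_inv, Equiv.symm_apply_apply,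
        Equiv.apply_symm_apply] at h ⊢
      omega
  · refine card_nbij' (fun p => (u⁻¹ p.2, u⁻¹ p.1)) (fun p => (u p.2, u p.1)) ?_ ?_
      (fun p _ => by simp) (fun p _ => by simp) <;>
    · rintro ⟨a, b⟩ h
      have hv := v.injective.eq_iff (a := a) (b := b)
      have hu' := u.symm.injective.eq_iff (a := a) (b := b)
      simp only [coe_filter, Set.mem_ofPred_eq, mem_fullInvSet_mul_inv hu, coe_sdiff,
        Set.mem_sdiff, mem_coe, mem_fullInvSet, Equiv.Perm.coe_inv, Equiv.symm_apply_apply,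
        Equiv.apply_symm_apply] at h ⊢
      omega

theorem wle_iff_fullInvSet_subset (hu : u ∈ SignedPerm n) (hv : v ∈ SignedPerm n) :
    wle n u v ↔ fullInvSet n u ⊆ fullInvSet n v := by
  have hvu := card_fullInvSet (mul_mem hv (inv_mem hu))
  have hu' := card_sdiff_add_card_inter (fullInvSet n u) (fullInvSet n v)
  have hv' := card_sdiff_add_card_inter (fullInvSet n v) (fullInvSet n u)
  rw [card_fullInvSet_mul_inv hu] at hvu
  rw [card_fullInvSet hu, inter_comm] at hu'
  rw [card_fullInvSet hv] at hv'
  rw [wle, ← sdiff_eq_empty_iff_subset, ← card_eq_zero]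
  omega

theorem wle_trans (hu : u ∈ SignedPerm n) (hv : v ∈ SignedPerm n) (hw : w ∈ SignedPerm n)
    (huv : wle n u v) (hvw : wle n v w) : wle n u w := by
  rw [wle_iff_fullInvSet_subset hu hv] at huv
  rw [wle_iff_fullInvSet_subset hv hw] at hvw
  exact (wle_iff_fullInvSet_subset hu hw).2 (huv.trans hvw)

theorem mem_DesSet_iff {i : ℕ} :
    i ∈ DesSet n w ↔ i < n ∧ ((i : ℤ), (i : ℤ) + 1) ∈ fullInvSet n w := by
  simp only [DesSet, mem_filter, mem_range, mem_fullInvSet]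
  omega

theorem DesSet_subset_of_wle (hu : u ∈ SignedPerm n) (hv : v ∈ SignedPerm n)
    (huv : wle n u v) : DesSet n u ⊆ DesSet n v := fun i hi => by
  rw [mem_DesSet_iff] at hi ⊢
  exact ⟨hi.1, (wle_iff_fullInvSet_subset hu hv).1 huv hi.2⟩

def nonzeroSucc (x : ℤ) : ℤ := if x = -1 then 1 else x + 1

def swapValues (x y z : ℤ) : ℤ :=
  if z = x then y else if z = y then x else if z = -x then -y else if z = -y then -x else z

-- `s_j` exchanges neighbours `x < y` of `ℤ ∖ {0}`, with `j = x`, `j = -y` or `j = 0`.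
theorem coe_sB_eq_swapValues {x : ℤ} (hx : x ≠ 0) :
    ⇑(sB (max x (-x - 1)).toNat) = swapValues x (nonzeroSucc x) := by
  funext z
  have hj : ((max x (-x - 1)).toNat : ℤ) = max x (-x - 1) := Int.toNat_of_nonneg (by omega)
  unfold sB swapValues nonzeroSucc
  by_cases h0 : (max x (-x - 1)).toNat = 0
  · rw [if_pos h0, Equiv.swap_apply_def]
    split_ifs <;> omega
  · rw [if_neg h0, Equiv.Perm.mul_apply, Equiv.swap_apply_def, Equiv.swap_apply_def, hj]
    split_ifs <;> omega

theorem sB_mem_signedPerm {n j : ℕ} (hj : j < n) : sB j ∈ SignedPerm n := by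
  unfold sB
  refine ⟨fun z => ?_, fun z hz => ?_⟩
  · split_ifs <;> simp only [Equiv.Perm.mul_apply, Equiv.swap_apply_def] <;> split_ifs <;> omega
  · rw [lt_abs] at hz
    split_ifs <;> simp only [Equiv.Perm.mul_apply, Equiv.swap_apply_def] <;> split_ifs <;> omega

theorem eq_of_swapValues_lt {x z₁ z₂ : ℤ} (h : z₁ < z₂)
    (h' : swapValues x (nonzeroSucc x) z₂ < swapValues x (nonzeroSucc x) z₁) :
    (z₁ = x ∧ z₂ = nonzeroSucc x) ∨ (z₁ = -nonzeroSucc x ∧ z₂ = -x) ∨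
      (x = -1 ∧ (z₁ = -1 ∧ z₂ = 0 ∨ z₁ = 0 ∧ z₂ = 1)) := by
  unfold swapValues nonzeroSucc at *
  split_ifs at h' ⊢ <;> omega

theorem eq_of_swapValues_reverses (hw : w ∈ SignedPerm n) (hq : w q = nonzeroSucc (w p))
    {a b : ℤ} (hab : w a < w b)
    (hba : swapValues (w p) (w q) (w b) < swapValues (w p) (w q) (w a)) :
    (a = p ∧ b = q) ∨ (a = -q ∧ b = -p) ∨ (w p = -1 ∧ (a = p ∧ b = 0 ∨ a = 0 ∧ b = q)) := by
  rw [hq] at hba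
  rcases eq_of_swapValues_lt hab hba with ⟨ha, hb⟩ | ⟨ha, hb⟩ | ⟨hx, ⟨ha, hb⟩ | ⟨ha, hb⟩⟩
  · exact Or.inl ⟨w.injective ha, w.injective (hb.trans hq.symm)⟩
  · exact Or.inr (Or.inl ⟨w.injective (by rw [ha, apply_neg hw, hq]),
      w.injective (by rw [hb, apply_neg hw])⟩)
  · exact Or.inr (Or.inr ⟨hx, Or.inl ⟨w.injective (ha.trans hx.symm),
      (apply_eq_zero_iff hw).1 hb⟩⟩)
  · exact Or.inr (Or.inr ⟨hx, Or.inr ⟨(apply_eq_zero_iff hw).1 ha,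
      w.injective (by rw [hb, hq, hx]; rfl)⟩⟩)

theorem fullInvSet_ssubset_mul (hw : w ∈ SignedPerm n) (hσ : ⇑σ = swapValues (w p) (w q))
    (hq : w q = nonzeroSucc (w p)) (hpq : p < q) (hp : -(n : ℤ) ≤ p)
    (hqn : q ≤ n) : fullInvSet n w ⊂ fullInvSet n (σ * w) := by
  have hqp : w p = -1 → q = -p := fun h => w.injective (by rw [hq, h, apply_neg hw, h]; rfl)
  have hsub : fullInvSet n w ⊆ fullInvSet n (σ * w) := by
    rintro ⟨a, b⟩ h
    obtain ⟨h₁, h₂, h₃, h₄, hab, hsum, hinv⟩ := mem_fullInvSet.1 h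
    refine mem_fullInvSet.2 ⟨h₁, h₂, h₃, h₄, hab, hsum, ?_⟩
    rw [Equiv.Perm.mul_apply, Equiv.Perm.mul_apply]
    by_contra hc
    have hne : σ (w a) ≠ σ (w b) := (σ.injective.comp w.injective).ne hab.ne
    have := eq_of_swapValues_reverses hw hq hinv (by rw [← hσ]; omega)
    omega
  refine (ssubset_iff_of_subset hsub).2 ?_
  by_cases hpq0 : p + q = 0
  · have hx : w p = -1 := by
      have := apply_neg hw p
      rw [show -p = q by omega, hq, nonzeroSucc] at this
      split_ifs at this <;> omega
    refine ⟨(0, q), mem_fullInvSet.2 ⟨by omega, by omega, by omega, hqn, by omega, by omega, ?_⟩,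
      fun h => ?_⟩
    · simp only [Equiv.Perm.mul_apply, hσ, swapValues, hq, apply_zero hw, hx]
      decide
    · have := (mem_fullInvSet.1 h).2.2.2.2.2.2
      rw [apply_zero hw, hq, hx] at this
      exact absurd this (by decide)
  · refine ⟨(p, q), mem_fullInvSet.2 ⟨hp, by omega, by omega, hqn, hpq, hpq0, ?_⟩, fun h => ?_⟩
    · simp only [Equiv.Perm.mul_apply, hσ, swapValues, hq, nonzeroSucc]
      split_ifs <;> omega
    · have := (mem_fullInvSet.1 h).2.2.2.2.2.2
      rw [hq, nonzeroSucc] at this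
      split_ifs at this <;> omega

theorem DesSet_mul_subset (hw : w ∈ SignedPerm n) (hσ : ⇑σ = swapValues (w p) (w q))
    (hq : w q = nonzeroSucc (w p)) {i : ℕ} (hpi : p ≤ i) (hiq : i < q) :
    DesSet n (σ * w) ⊆ insert i (DesSet n w) := by
  intro k hk
  simp only [DesSet, mem_filter, mem_range, mem_insert] at hk ⊢
  by_contra! hc
  have hlt : w k < w (k + 1) :=
    lt_of_le_of_ne (hc.2 hk.1) (w.injective.ne (by omega))
  have := eq_of_swapValues_reverses hw hq hlt (by rw [← hσ]; exact hk.2)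
  omega

theorem exists_nonzeroSucc_of_notMem_DesSet (hw : w ∈ SignedPerm n) {i : ℕ} (hi : i < n)
    (hdes : i ∉ DesSet n w) : ∃ p q : ℤ, w p ≠ 0 ∧ w q = nonzeroSucc (w p) ∧
      p ≤ i ∧ i < q ∧ -(n : ℤ) ≤ p ∧ q ≤ n := by
  simp only [DesSet, mem_filter, mem_range, not_and, not_lt] at hdes
  obtain ⟨hd₁, hd₂⟩ := apply_mem_Icc hw (a := i + 1) ⟨by omega, by omega⟩
  have hd0 : w (i + 1) ≠ 0 := (apply_eq_zero_iff hw).not.2 (by omega)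
  have hid : w i < w (i + 1) := lt_of_le_of_ne (hdes hi) (w.injective.ne (by omega))
  set S := (Icc (-(n : ℤ)) i).filter fun a => w a ≠ 0 ∧ w a < w (i + 1)
  have hS : S.Nonempty := by
    by_cases hi0 : w i = 0
    · refine ⟨-(i + 1), ?_⟩
      simp only [S, mem_filter, mem_Icc, apply_neg hw]
      omega
    · exact ⟨i, by simp only [S, mem_filter, mem_Icc]; omega⟩
  obtain ⟨p, hpS, hmax⟩ := S.exists_max_image w hS
  simp only [S, mem_filter, mem_Icc] at hpS
  obtain ⟨hp₁, hp₂⟩ := apply_mem_Icc hw (a := p) ⟨hpS.1.1, by omega⟩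
  obtain ⟨q, hq⟩ := w.surjective (nonzeroSucc (w p))
  have hyd : w q ≤ w (i + 1) := by rw [hq, nonzeroSucc]; split_ifs <;> omega
  have hqn := (apply_mem_Icc_iff hw (a := q)).1
    ⟨by rw [hq, nonzeroSucc]; split_ifs <;> omega, hyd.trans hd₂⟩
  refine ⟨p, q, hpS.2.1, hq, hpS.1.2, ?_, hpS.1.1, hqn.2⟩
  by_contra! hqi
  rcases hyd.lt_or_eq with hlt | heq
  · have := hmax q (mem_filter.2 ⟨mem_Icc.2 ⟨hqn.1, hqi⟩, ?_, hlt⟩)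
    · rw [hq, nonzeroSucc] at this; split_ifs at this <;> omega
    · rw [hq, nonzeroSucc]; split_ifs <;> omega
  · have := w.injective heq
    omega

theorem exists_fullInvSet_ssubset_of_notMem_DesSet (hw : w ∈ SignedPerm n) {i : ℕ} (hi : i < n)
    (hdes : i ∉ DesSet n w) : ∃ w' ∈ SignedPerm n,
      fullInvSet n w ⊂ fullInvSet n w' ∧ DesSet n w' ⊆ insert i (DesSet n w) := by
  obtain ⟨p, q, hp0, hq, hpi, hiq, hp, hqn⟩ := exists_nonzeroSucc_of_notMem_DesSet hw hi hdes
  have hσ : ⇑(sB (max (w p) (-w p - 1)).toNat) = swapValues (w p) (w q) :=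
    hq ▸ coe_sB_eq_swapValues hp0
  refine ⟨_, mul_mem (sB_mem_signedPerm ?_) hw,
    fullInvSet_ssubset_mul hw hσ hq (by omega) hp hqn, DesSet_mul_subset hw hσ hq hpi hiq⟩
  obtain ⟨hx₁, hx₂⟩ := apply_mem_Icc hw (a := p) ⟨hp, by omega⟩
  obtain ⟨hy₁, hy₂⟩ := apply_mem_Icc hw (a := q) ⟨by omega, hqn⟩
  rw [hq, nonzeroSucc] at hy₁ hy₂
  split_ifs at hy₁ hy₂ <;> omega

theorem card_fullInvSet_le : #(fullInvSet n w) ≤ (2 * n + 1) * (2 * n + 1) := by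
  refine (card_filter_le _ _).trans_eq ?_
  rw [card_product, Int.card_Icc, show ((n : ℤ) + 1 - -n).toNat = 2 * n + 1 by omega]

theorem wle_of_DesSet_subset (hI : I ⊆ range n) (hζ : ζ ∈ SignedPerm n)
    (hmax : ∀ w ∈ SignedPerm n, DesSet n w = I → wle n w ζ) (hw : w ∈ SignedPerm n)
    (hDes : DesSet n w ⊆ I) : wle n w ζ := by
  induction hk : (2 * n + 1) * (2 * n + 1) - #(fullInvSet n w) using Nat.strong_induction_on
    generalizing w with
  | _ k ih =>
    by_cases hD : DesSet n w = I
    · exact hmax w hw hD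
    obtain ⟨i, hiI, hiw⟩ := exists_of_ssubset (hDes.ssubset_of_ne hD)
    obtain ⟨w', hw', hlt, hDes'⟩ :=
      exists_fullInvSet_ssubset_of_notMem_DesSet hw (mem_range.1 (hI hiI)) hiw
    have hw'ζ : wle n w' ζ :=
      ih _ (by have := card_lt_card hlt; have := @card_fullInvSet_le n w'; omega) hw'
        (hDes'.trans (insert_subset hiI hDes)) rfl
    exact wle_trans hw hw' hζ ((wle_iff_fullInvSet_subset hw hw').2 hlt.subset) hw'ζ

end InversionSet

/-- The pair `(Des, g) : 𝔅ₙ ⇄ 2^{[0,n-1]}` is a Galois connection,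
where `g I = ζ_I` is the largest element of the descent class of `I`: `Des` is
order-preserving and surjective, `g` is order-preserving, and
`Des(w) ⊆ I ↔ w ≤ ζ_I` for all `w ∈ 𝔅ₙ` and `I ⊆ {0,…,n-1}`. -/
theorem descent_galois_connection (n : ℕ) (g : Finset ℕ → Equiv.Perm ℤ)
    (hg : ∀ I ⊆ Finset.range n, g I ∈ SignedPerm n ∧ DesSet n (g I) = I ∧
      ∀ w ∈ SignedPerm n, DesSet n w = I → wle n w (g I)) :
    (∀ u ∈ SignedPerm n, ∀ v ∈ SignedPerm n, wle n u v → DesSet n u ⊆ DesSet n v) ∧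
    (∀ I ⊆ Finset.range n, ∃ w ∈ SignedPerm n, DesSet n w = I) ∧
    (∀ I ⊆ Finset.range n, ∀ J ⊆ Finset.range n, I ⊆ J → wle n (g I) (g J)) ∧
    (∀ w ∈ SignedPerm n, ∀ I ⊆ Finset.range n, (DesSet n w ⊆ I ↔ wle n w (g I))) := by
  have galois : ∀ w ∈ SignedPerm n, ∀ I ⊆ Finset.range n, DesSet n w ⊆ I ↔ wle n w (g I) :=
    fun w hw I hI => ⟨wle_of_DesSet_subset hI (hg I hI).1 (hg I hI).2.2 hw,
      fun h => (hg I hI).2.1 ▸ DesSet_subset_of_wle hw (hg I hI).1 h⟩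
  refine ⟨fun u hu v hv => DesSet_subset_of_wle hu hv,
    fun I hI => ⟨g I, (hg I hI).1, (hg I hI).2.1⟩, fun I hI J hJ hIJ => ?_, galois⟩
  rw [← galois _ (hg I hI).1 J hJ, (hg I hI).2.1]
  exact hIJ
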